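/- Let BP(T) be the balanced-parenthesis sequence of the 2d-min heap Min(A), and let f(i) denote the position in BP of the opening bit (0) written when node i is first visited in preorder. Then a node i is valid (i.e., a non-root node that is neither a leftmost child nor the immediate right sibling of a leaf) if and only if f(i) > 2 and BP[f(i)-2] = BP[f(i)-1] = 1. -/

import Mathlib

def psv (A : ℕ → ℤ) (i : ℕ) : ℕ := Nat.findGreatest (fun j => A j < A i) (i - 1)

def plv (A : ℕ → ℤ) (i : ℕ) : ℕ := Nat.findGreatest (fun j => A i < A j) (i - 1)

def internalMin (A : ℕ → ℤ) (n i : ℕ) : Prop := ∃ j, 1 ≤ j ∧ j ≤ n ∧ psv A j = i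

def internalMax (A : ℕ → ℤ) (n i : ℕ) : Prop := ∃ j, 1 ≤ j ∧ j ≤ n ∧ plv A j = i

def leafMin (A : ℕ → ℤ) (n i : ℕ) : Prop := ¬ internalMin A n i

def leafMax (A : ℕ → ℤ) (n i : ℕ) : Prop := ¬ internalMax A n i

def NoConsecEq (A : ℕ → ℤ) (n : ℕ) : Prop := ∀ i, 1 ≤ i → i < n → A i ≠ A (i + 1)

def isLeftmostChildMin (A : ℕ → ℤ) (n c : ℕ) : Prop :=
  1 ≤ c ∧ c ≤ n ∧ ∀ j, 1 ≤ j → j ≤ n → psv A j = psv A c → c ≤ j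

def isLeftmostChildMax (A : ℕ → ℤ) (n c : ℕ) : Prop :=
  1 ≤ c ∧ c ≤ n ∧ ∀ j, 1 ≤ j → j ≤ n → plv A j = plv A c → c ≤ j

def immLeftSibMin (A : ℕ → ℤ) (n j i : ℕ) : Prop :=
  1 ≤ j ∧ j < i ∧ i ≤ n ∧ psv A j = psv A i ∧ ∀ k, j < k → k < i → psv A k ≠ psv A i

def immLeftSibMax (A : ℕ → ℤ) (n j i : ℕ) : Prop :=
  1 ≤ j ∧ j < i ∧ i ≤ n ∧ plv A j = plv A i ∧ ∀ k, j < k → k < i → plv A k ≠ plv A i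

def redMin (A : ℕ → ℤ) (n i : ℕ) : Prop := ∃ j, immLeftSibMin A n j i ∧ A j ≠ A i

def redMax (A : ℕ → ℤ) (n i : ℕ) : Prop := ∃ j, immLeftSibMax A n j i ∧ A j ≠ A i

def validMin (A : ℕ → ℤ) (n i : ℕ) : Prop :=
  1 ≤ i ∧ i ≤ n ∧ ¬ isLeftmostChildMin A n i ∧ ¬ ∃ j, immLeftSibMin A n j i ∧ leafMin A n j

def validMax (A : ℕ → ℤ) (n i : ℕ) : Prop :=
  1 ≤ i ∧ i ≤ n ∧ ¬ isLeftmostChildMax A n i ∧ ¬ ∃ j, immLeftSibMax A n j i ∧ leafMax A n j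

inductive LTree where
  | node : ℕ → List LTree → LTree

mutual
def bpt : LTree → List (Bool × ℕ)
  | .node l cs => (false, l) :: bptL cs ++ [(true, l)]
def bptL : List LTree → List (Bool × ℕ)
  | [] => []
  | t :: ts => bpt t ++ bptL ts
end

def bpSeq (t : LTree) : List Bool := (bpt t).map Prod.fst

def fpos (t : LTree) (i : ℕ) : ℕ := (bpt t).idxOf (false, i) + 1

def childList (P : ℕ → ℕ) (n i : ℕ) : List ℕ :=
  (List.range (n + 1)).filter (fun j => decide (1 ≤ j ∧ P j = i ∧ i < j))

def buildTree (P : ℕ → ℕ) (n : ℕ) : ℕ → ℕ → LTree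
  | 0, i => .node i []
  | fuel + 1, i => .node i ((childList P n i).map (buildTree P n fuel))

def minTree (A : ℕ → ℤ) (n : ℕ) : LTree := buildTree (psv A) n (n + 1) 0

def maxTree (A : ℕ → ℤ) (n : ℕ) : LTree := buildTree (plv A) n (n + 1) 0

/-! In the BP sequence of the tree with parent function `psv A`, the opening bit of a node `i` is
preceded by the opening bit of its parent when `i` is a leftmost child, and otherwise by the
closing bit of its immediate left sibling `j`; that closing bit is itself preceded by a closing bit
exactly when `j` has children. Positions are well defined because the tree never repeats a label:
every node has a unique chain of parents, so distinct children of a node have disjoint subtrees. -/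

lemma bptL_eq_flatMap (ts : List LTree) : bptL ts = ts.flatMap bpt := by
  induction ts with
  | nil => simp [bptL]
  | cons t ts ih => simp [bptL, ih]

lemma bpt_node (l : ℕ) (cs : List LTree) :
    bpt (.node l cs) = (false, l) :: (cs.flatMap bpt ++ [(true, l)]) := by
  simp [bpt, bptL_eq_flatMap]

lemma exists_bpt_node_eq_append (l : ℕ) (cs : List LTree) :
    ∃ B r, bpt (.node l cs) = B ++ [(!cs.isEmpty, r), (true, l)] := by
  rcases List.eq_nil_or_concat cs with rfl | ⟨cs', ⟨k, ds⟩, rfl⟩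
  · exact ⟨[], l, by simp [bpt_node]⟩
  · exact ⟨(false, l) :: cs'.flatMap bpt ++ (false, k) :: ds.flatMap bpt, k, by simp [bpt_node]⟩

lemma mem_childList {P : ℕ → ℕ} {n i j : ℕ} :
    j ∈ childList P n i ↔ 1 ≤ j ∧ j ≤ n ∧ P j = i ∧ i < j := by
  simp only [childList, List.mem_filter, List.mem_range, decide_eq_true_eq]
  omega

lemma pairwise_lt_childList (P : ℕ → ℕ) (n i : ℕ) : (childList P n i).Pairwise (· < ·) :=
  List.pairwise_lt_range.sublist List.filter_sublist

lemma childList_eq_nil_of_lt {P : ℕ → ℕ} {n i : ℕ} (h : n < i) : childList P n i = [] :=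
  List.eq_nil_iff_forall_not_mem.2 fun j hj => by have := mem_childList.1 hj; omega

lemma buildTree_congr_fuel (P : ℕ → ℕ) (n : ℕ) {f g i : ℕ} (hf : n < i + f) (hg : n < i + g) :
    buildTree P n f i = buildTree P n g i := by
  induction f generalizing g i with
  | zero =>
    have hi : n < i := by omega
    cases g <;> simp [buildTree, childList_eq_nil_of_lt hi]
  | succ f ih =>
    cases g with
    | zero =>
      have hi : n < i := by omega
      simp [buildTree, childList_eq_nil_of_lt hi]
    | succ g =>
      simp only [buildTree, LTree.node.injEq, true_and]
      refine List.map_congr_left fun c hc => ?_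
      have := mem_childList.1 hc
      exact ih (g := g) (i := c) (by omega) (by omega)

def subtree (P : ℕ → ℕ) (n i : ℕ) : LTree := buildTree P n (n + 1) i

lemma subtree_eq (P : ℕ → ℕ) (n i : ℕ) :
    subtree P n i = .node i ((childList P n i).map (subtree P n)) := by
  simp only [subtree, buildTree, LTree.node.injEq, true_and]
  refine List.map_congr_left fun c hc => ?_
  have := mem_childList.1 hc
  exact buildTree_congr_fuel P n (by omega) (by omega)

lemma bpt_subtree_of_childList_eq {P : ℕ → ℕ} {n p c : ℕ} {a b : List ℕ}
    (h : childList P n p = a ++ c :: b) :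
    bpt (subtree P n p) = ((false, p) :: a.flatMap (fun d => bpt (subtree P n d))) ++
      bpt (subtree P n c) ++ (b.flatMap (fun d => bpt (subtree P n d)) ++ [(true, p)]) := by
  rw [subtree_eq, bpt_node, h]
  simp [List.flatMap_map]

def IsChild (P : ℕ → ℕ) (c p : ℕ) : Prop := P c = p ∧ p < c

lemma isChild_of_mem_childList {P : ℕ → ℕ} {n c p : ℕ} (h : c ∈ childList P n p) :
    IsChild P c p :=
  (mem_childList.1 h).2.2

section IsChild

open Relation

variable {P : ℕ → ℕ}

lemma le_of_reflTransGen_isChild {a b : ℕ} (h : ReflTransGen (IsChild P) a b) : b ≤ a := by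
  induction h with
  | refl => exact le_rfl
  | tail _ hbc ih => exact hbc.2.le.trans ih

lemma isChild_rightUnique : Relator.RightUnique (IsChild P) :=
  fun _ _ _ h h' => h.1.symm.trans h'.1

lemma eq_of_reflTransGen_isChild {c c' p : ℕ} (hc : IsChild P c p) (hc' : IsChild P c' p)
    (h : ReflTransGen (IsChild P) c c') : c = c' := by
  rcases h.cases_head with h | ⟨d, hcd, hdc'⟩
  · exact h
  · have := le_of_reflTransGen_isChild hdc'
    have := isChild_rightUnique hc hcd
    have := hc'.2
    omega

lemma mem_bpt_buildTree {n f i : ℕ} {x : Bool × ℕ} (hx : x ∈ bpt (buildTree P n f i)) :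
    ReflTransGen (IsChild P) x.2 i := by
  induction f generalizing i with
  | zero =>
    simp only [buildTree, bpt_node, List.flatMap_nil, List.nil_append, List.mem_cons,
      List.not_mem_nil, or_false] at hx
    rcases hx with rfl | rfl <;> exact .refl
  | succ f ih =>
    simp only [buildTree, bpt_node, List.mem_cons, List.mem_append, List.mem_flatMap,
      List.mem_map, List.not_mem_nil, or_false] at hx
    rcases hx with rfl | ⟨_, ⟨c, hc, rfl⟩, hx⟩ | rfl
    · exact .refl
    · exact (ih hx).tail (isChild_of_mem_childList hc)
    · exact .refl

lemma nodup_bpt_buildTree (n f i : ℕ) : (bpt (buildTree P n f i)).Nodup := by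
  induction f generalizing i with
  | zero => simp [buildTree, bpt_node]
  | succ f ih =>
    have hlabel : ∀ x ∈ ((childList P n i).map (buildTree P n f)).flatMap bpt, x.2 ≠ i := by
      simp only [List.mem_flatMap, List.mem_map]
      rintro x ⟨_, ⟨c, hc, rfl⟩, hx⟩
      have := le_of_reflTransGen_isChild (mem_bpt_buildTree hx)
      have := (isChild_of_mem_childList hc).2
      omega
    have hdisj : ((childList P n i).map (buildTree P n f)).Pairwise
        (Function.onFun List.Disjoint bpt) := by
      rw [List.pairwise_map]
      refine (pairwise_lt_childList P n i).imp_of_mem fun {c c'} hc hc' hlt x hx hx' => ?_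
      have hc := isChild_of_mem_childList hc
      have hc' := isChild_of_mem_childList hc'
      rcases ReflTransGen.total_of_right_unique isChild_rightUnique
        (mem_bpt_buildTree hx) (mem_bpt_buildTree hx') with h | h
      · exact hlt.ne (eq_of_reflTransGen_isChild hc hc' h)
      · exact hlt.ne' (eq_of_reflTransGen_isChild hc' hc h)
    rw [buildTree, bpt_node, List.nodup_cons, List.nodup_append]
    refine ⟨?_, List.nodup_flatMap.2 ⟨by simpa using fun c _ => ih c, hdisj⟩, by simp, ?_⟩
    · simp only [List.mem_append, List.mem_singleton, not_or]
      exact ⟨fun h => hlabel _ h rfl, by simp⟩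
    · simp only [List.mem_singleton]
      rintro x hx _ rfl rfl
      exact hlabel _ hx rfl

lemma nodup_bpt_subtree (P : ℕ → ℕ) (n i : ℕ) : (bpt (subtree P n i)).Nodup :=
  nodup_bpt_buildTree n (n + 1) i

end IsChild

lemma infix_bpt_subtree_zero {P : ℕ → ℕ} (hP : ∀ m, 1 ≤ m → P m < m) {n j : ℕ} (hj : j ≤ n) :
    bpt (subtree P n j) <:+: bpt (subtree P n 0) := by
  induction j using Nat.strong_induction_on with
  | _ j ih =>
    rcases Nat.eq_zero_or_pos j with rfl | hj1
    · exact List.infix_refl _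
    · have hPj := hP j hj1
      obtain ⟨a, b, h⟩ := List.append_of_mem (mem_childList.2 ⟨hj1, hj, rfl, hPj⟩)
      refine List.IsInfix.trans ?_ (ih _ hPj (by omega))
      rw [bpt_subtree_of_childList_eq h]
      exact ⟨_, _, rfl⟩

lemma exists_bpt_subtree_zero_eq {P : ℕ → ℕ} (hP : ∀ m, 1 ≤ m → P m < m) {n p c : ℕ}
    {a b : List ℕ} (h : childList P n p = a ++ c :: b) :
    ∃ U V, bpt (subtree P n 0) = U ++ ((false, p) :: a.flatMap (fun d => bpt (subtree P n d))) ++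
      bpt (subtree P n c) ++ V := by
  have hc := mem_childList.1 (h ▸ List.mem_append_right a List.mem_cons_self)
  obtain ⟨U, V, hUV⟩ := infix_bpt_subtree_zero hP (n := n) (j := p) (by omega)
  refine ⟨U, (b.flatMap (fun d => bpt (subtree P n d)) ++ [(true, p)]) ++ V, ?_⟩
  rw [← hUV, bpt_subtree_of_childList_eq h]
  simp

lemma fpos_eq {t : LTree} {U V : List (Bool × ℕ)} {i : ℕ} (hnd : (bpt t).Nodup)
    (h : bpt t = U ++ (false, i) :: V) : fpos t i = U.length + 1 := by
  rw [h] at hnd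
  rw [fpos, h,
    List.idxOf_append_of_notMem (List.disjoint_of_nodup_append hnd · List.mem_cons_self)]
  simp

lemma getD_bpSeq {t : LTree} {U V : List (Bool × ℕ)} {y : Bool × ℕ}
    (h : bpt t = U ++ y :: V) : (bpSeq t).getD U.length false = y.1 := by
  simp [bpSeq, h]

section BalancedParentheses

variable {P : ℕ → ℕ} (hP : ∀ m, 1 ≤ m → P m < m) {n i : ℕ}
include hP

lemma bpSeq_getD_fpos_sub_two_of_leftmost {b : List ℕ} (h : childList P n (P i) = i :: b) :
    (bpSeq (subtree P n 0)).getD (fpos (subtree P n 0) i - 2) false = false := by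
  obtain ⟨U, V, hUV⟩ := exists_bpt_subtree_zero_eq hP (a := []) h
  obtain ⟨W, hL⟩ : ∃ W, bpt (subtree P n 0) = U ++ (false, P i) :: (false, i) :: W := by
    rw [hUV, subtree_eq P n i, bpt_node]
    exact ⟨((childList P n i).map (subtree P n)).flatMap bpt ++ (true, i) :: V, by simp⟩
  have hf : fpos (subtree P n 0) i = U.length + 2 := by
    simpa using fpos_eq (U := U ++ [(false, P i)]) (V := W) (nodup_bpt_subtree P n 0)
      (by rw [hL]; simp)
  rw [hf]
  exact getD_bpSeq hL

lemma bpSeq_getD_fpos_of_right_sibling {a b : List ℕ} {j : ℕ}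
    (h : childList P n (P i) = a ++ j :: i :: b) :
    2 < fpos (subtree P n 0) i ∧
      (bpSeq (subtree P n 0)).getD (fpos (subtree P n 0) i - 3) false =
        !(childList P n j).isEmpty ∧
      (bpSeq (subtree P n 0)).getD (fpos (subtree P n 0) i - 2) false = true := by
  obtain ⟨U, V, hUV⟩ :=
    exists_bpt_subtree_zero_eq hP (a := a ++ [j]) (c := i) (b := b) (by rw [h]; simp)
  obtain ⟨B, r, hB⟩ := exists_bpt_node_eq_append j ((childList P n j).map (subtree P n))
  obtain ⟨U', W, hL⟩ : ∃ U' W, bpt (subtree P n 0) =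
      U' ++ (!(childList P n j).isEmpty, r) :: (true, j) :: (false, i) :: W := by
    rw [hUV, subtree_eq P n i, bpt_node, List.flatMap_append, List.flatMap_singleton,
      subtree_eq P n j, hB]
    exact ⟨U ++ (false, P i) :: (a.flatMap (fun d => bpt (subtree P n d)) ++ B),
      ((childList P n i).map (subtree P n)).flatMap bpt ++ (true, i) :: V, by simp⟩
  have hf : fpos (subtree P n 0) i = U'.length + 3 := by
    simpa using fpos_eq (U := U' ++ [(!(childList P n j).isEmpty, r), (true, j)]) (V := W)
      (nodup_bpt_subtree P n 0) (by rw [hL]; simp)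
  refine ⟨by omega, ?_, ?_⟩
  · rw [hf]
    exact getD_bpSeq hL
  · rw [hf]
    simpa using getD_bpSeq (U := U' ++ [(!(childList P n j).isEmpty, r)]) (y := (true, j))
      (V := (false, i) :: W) (by rw [hL]; simp)

end BalancedParentheses

lemma mem_left_iff_lt_of_pairwise_lt {α : Type*} [Preorder α] {a b : List α} {x y : α}
    (hs : (a ++ x :: b).Pairwise (· < ·)) (hy : y ∈ a ++ x :: b) : y ∈ a ↔ y < x := by
  rw [List.pairwise_append, List.pairwise_cons] at hs
  refine ⟨fun ha => hs.2.2 y ha x List.mem_cons_self, fun hlt => ?_⟩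
  rcases List.mem_append.1 hy with ha | hb
  · exact ha
  rcases List.mem_cons.1 hb with rfl | hb
  · exact absurd hlt (lt_irrefl y)
  · exact absurd hlt (hs.2.1.1 y hb).asymm

lemma psv_lt (A : ℕ → ℤ) {m : ℕ} (hm : 1 ≤ m) : psv A m < m := by
  have := Nat.findGreatest_le (P := fun j => A j < A m) (m - 1)
  unfold psv
  omega

section MinHeap

variable {A : ℕ → ℤ} {n i : ℕ}

lemma mem_childList_psv_iff {p j : ℕ} :
    j ∈ childList (psv A) n p ↔ 1 ≤ j ∧ j ≤ n ∧ psv A j = p := by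
  rw [mem_childList]
  exact ⟨fun h => ⟨h.1, h.2.1, h.2.2.1⟩, fun h => ⟨h.1, h.2.1, h.2.2, h.2.2 ▸ psv_lt A h.1⟩⟩

lemma minTree_eq_subtree : minTree A n = subtree (psv A) n 0 := rfl

lemma leafMin_iff_childList_eq_nil {j : ℕ} : leafMin A n j ↔ childList (psv A) n j = [] := by
  simp [leafMin, internalMin, List.eq_nil_iff_forall_not_mem, mem_childList_psv_iff]

lemma isLeftmostChildMin_iff {a b : List ℕ} (h : childList (psv A) n (psv A i) = a ++ i :: b) :
    isLeftmostChildMin A n i ↔ a = [] := by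
  have hs := h ▸ pairwise_lt_childList (psv A) n (psv A i)
  have hmem : ∀ {j}, j ∈ childList (psv A) n (psv A i) → (j ∈ a ↔ j < i) := fun hj =>
    mem_left_iff_lt_of_pairwise_lt hs (h ▸ hj)
  have hi := mem_childList_psv_iff.1 (h ▸ List.mem_append_right a List.mem_cons_self)
  constructor
  · rintro ⟨-, -, hleft⟩
    refine List.eq_nil_iff_forall_not_mem.2 fun c hc => ?_
    have hc' := mem_childList_psv_iff.1 (h ▸ List.mem_append_left _ hc)
    exact absurd ((hmem (h ▸ List.mem_append_left _ hc)).1 hc)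
      (not_lt.2 (hleft c hc'.1 hc'.2.1 hc'.2.2))
  · rintro rfl
    refine ⟨hi.1, hi.2.1, fun j hj1 hjn hjP => ?_⟩
    exact not_lt.1 fun hlt => by simpa using (hmem (mem_childList_psv_iff.2 ⟨hj1, hjn, hjP⟩)).2 hlt

lemma immLeftSibMin_iff {a b : List ℕ} {j k : ℕ}
    (h : childList (psv A) n (psv A i) = a ++ j :: i :: b) :
    immLeftSibMin A n k i ↔ k = j := by
  have h' : childList (psv A) n (psv A i) = (a ++ [j]) ++ i :: b := by simp [h]
  have hs := pairwise_lt_childList (psv A) n (psv A i)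
  have hlt_i : ∀ {m}, m ∈ childList (psv A) n (psv A i) → (m ∈ a ++ [j] ↔ m < i) := fun hm =>
    mem_left_iff_lt_of_pairwise_lt (h' ▸ hs) (h' ▸ hm)
  have hlt_j : ∀ {m}, m ∈ childList (psv A) n (psv A i) → (m ∈ a ↔ m < j) := fun hm =>
    mem_left_iff_lt_of_pairwise_lt (h ▸ hs) (h ▸ hm)
  have hj : j ∈ childList (psv A) n (psv A i) := by simp [h]
  have hi := mem_childList_psv_iff.1 (by simp [h] : i ∈ childList (psv A) n (psv A i))
  have hj' := mem_childList_psv_iff.1 hj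
  have hji : j < i := (hlt_i hj).1 (by simp)
  constructor
  · rintro ⟨hk1, hki, -, hkP, hbetween⟩
    have hk : k ∈ childList (psv A) n (psv A i) := mem_childList_psv_iff.2 ⟨hk1, by omega, hkP⟩
    rcases List.mem_append.1 ((hlt_i hk).2 hki) with ha | hkj
    · exact absurd hj'.2.2 (hbetween j ((hlt_j hk).1 ha) hji)
    · simpa using hkj
  · rintro rfl
    refine ⟨hj'.1, hji, hi.2.1, hj'.2.2, fun m hkm hmi hmP => ?_⟩
    have hm : m ∈ childList (psv A) n (psv A i) :=
      mem_childList_psv_iff.2 ⟨by omega, by omega, hmP⟩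
    rcases List.mem_append.1 ((hlt_i hm).2 hmi) with ha | hmk
    · exact absurd ((hlt_j hm).1 ha) (by omega)
    · simp at hmk
      omega

end MinHeap

theorem stmt4 (A : ℕ → ℤ) (n i : ℕ) (h1 : 1 ≤ i) (h2 : i ≤ n) :
    validMin A n i ↔
      (2 < fpos (minTree A n) i ∧
        (bpSeq (minTree A n)).getD (fpos (minTree A n) i - 3) false = true ∧
        (bpSeq (minTree A n)).getD (fpos (minTree A n) i - 2) false = true) := by
  have hP : ∀ m, 1 ≤ m → psv A m < m := fun _ => psv_lt A
  rw [minTree_eq_subtree]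
  obtain ⟨a, b, h⟩ := List.append_of_mem (mem_childList_psv_iff.2 ⟨h1, h2, rfl⟩)
  rcases List.eq_nil_or_concat a with rfl | ⟨a, j, rfl⟩
  · have hleft : isLeftmostChildMin A n i := (isLeftmostChildMin_iff h).2 rfl
    have hbit := bpSeq_getD_fpos_sub_two_of_leftmost hP h
    exact iff_of_false (fun hv => hv.2.2.1 hleft)
      fun ⟨_, _, hbp⟩ => Bool.false_ne_true (hbit.symm.trans hbp)
  · have h' : childList (psv A) n (psv A i) = a ++ j :: i :: b := by simpa using h
    have hvalid : validMin A n i ↔ ¬ leafMin A n j := by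
      simp [validMin, h1, h2, isLeftmostChildMin_iff h, immLeftSibMin_iff h']
    obtain ⟨hpos, hbit3, hbit2⟩ := bpSeq_getD_fpos_of_right_sibling hP h'
    rw [hvalid, leafMin_iff_childList_eq_nil, hbit3, hbit2]
    simp [hpos]
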